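/- arXiv:1501.05971 — 3 statements merged into one kernel-verified Lean document; each statement's English description precedes it below -/
import Mathlib

section
/- Let {d_1, …, d_{k-1}} be linearly independent with dual basis {b_1^old, …, b_{k-1}^old} in V_{k-1} = span{d_1,…,d_{k-1}}. Adjoin d_k ∉ V_{k-1}, and let b_k be the new k-th dual vector in V_k = span{d_1,…,d_k}. Then the updated dual vectors b_n = b_n^old − b_k ⟨d_k, b_n^old⟩, for n = 1, …, k−1, together with b_k, form the dual basis of {d_1, …, d_k} in V_k. -/
open scoped RealInnerProductSpace BigOperators

/-! Writing `w = v - P_K v`, the vector `w / ‖w‖²` is orthogonal to `K` and pairs to `1` with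
`v`, since `⟪v, w⟫ = ‖w‖²`. Subtracting `⟪v, b⟫ • (w / ‖w‖²)` from an old dual vector `b` kills
its pairing with `v` without changing its pairings with the vectors of `K`. -/

namespace Submodule

variable {E : Type*} [NormedAddCommGroup E] [InnerProductSpace ℝ E]
  (K : Submodule ℝ E) [K.HasOrthogonalProjection]

noncomputable def dualVector (v : E) : E :=
  (‖v - K.starProjection v‖ ^ 2)⁻¹ • (v - K.starProjection v)

variable {K}

theorem inner_self_sub_starProjection (v : E) :
    ⟪v, v - K.starProjection v⟫ = ‖v - K.starProjection v‖ ^ 2 := by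
  calc ⟪v, v - K.starProjection v⟫
      = ⟪v - K.starProjection v, v - K.starProjection v⟫
          + ⟪K.starProjection v, v - K.starProjection v⟫ := by
        rw [← inner_add_left, sub_add_cancel]
    _ = ‖v - K.starProjection v‖ ^ 2 := by
        rw [real_inner_self_eq_norm_sq, real_inner_comm,
          K.starProjection_inner_eq_zero _ _ (K.starProjection_apply_mem v), add_zero]

theorem sub_starProjection_ne_zero {v : E} (hv : v ∉ K) : v - K.starProjection v ≠ 0 := by
  rw [sub_ne_zero]
  exact fun h => hv (h ▸ K.starProjection_apply_mem v)

theorem inner_dualVector_of_mem {u : E} (hu : u ∈ K) (v : E) : ⟪u, K.dualVector v⟫ = 0 := by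
  rw [dualVector, real_inner_smul_right, real_inner_comm,
    K.starProjection_inner_eq_zero _ _ hu, mul_zero]

theorem inner_self_dualVector {v : E} (hv : v ∉ K) : ⟪v, K.dualVector v⟫ = 1 := by
  have hw : ‖v - K.starProjection v‖ ^ 2 ≠ 0 :=
    pow_ne_zero _ (norm_ne_zero_iff.mpr (sub_starProjection_ne_zero hv))
  rw [dualVector, real_inner_smul_right, inner_self_sub_starProjection, inv_mul_cancel₀ hw]

theorem dualVector_mem {W : Submodule ℝ E} (hKW : K ≤ W) {v : E} (hvW : v ∈ W) :
    K.dualVector v ∈ W :=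
  W.smul_mem _ (W.sub_mem hvW (hKW (K.starProjection_apply_mem v)))

end Submodule

section DualUpdate

variable {E : Type*} [NormedAddCommGroup E] [InnerProductSpace ℝ E]

theorem inner_sub_inner_smul_of_inner_eq_one {e c : E} (hc : ⟪e, c⟫ = 1) (b : E) :
    ⟪e, b - ⟪e, b⟫ • c⟫ = 0 := by
  rw [inner_sub_right, real_inner_smul_right, hc, mul_one, sub_self]

theorem inner_sub_smul_of_inner_eq_zero {u c : E} (hc : ⟪u, c⟫ = 0) (b : E) (a : ℝ) :
    ⟪u, b - a • c⟫ = ⟪u, b⟫ := by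
  rw [inner_sub_right, real_inner_smul_right, hc, mul_zero, sub_zero]

end DualUpdate

/-- update recursion for the dual basis when an atom `d_k` is
adjoined: `b_n = b_n^old − ⟨d_k, b_n^old⟩ b_k`, together with `b_k = w_k/‖w_k‖²`,
form the dual basis of `{d_1,…,d_k}` in `V_k`. -/
theorem stmt_6 (Nb k : ℕ) (d : Fin (k + 1) → EuclideanSpace ℝ (Fin Nb))
    (hind : LinearIndependent ℝ d)
    (bold : Fin k → EuclideanSpace ℝ (Fin Nb))
    (hboldV : ∀ n, bold n ∈
      Submodule.span ℝ (Set.range fun i : Fin k => d i.castSucc))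
    (hboldbi : ∀ n m : Fin k, ⟪d n.castSucc, bold m⟫ = if n = m then 1 else 0)
    (w : EuclideanSpace ℝ (Fin Nb))
    (hw : w = d (Fin.last k) -
      (Submodule.orthogonalProjection
        (Submodule.span ℝ (Set.range fun i : Fin k => d i.castSucc))
        (d (Fin.last k)) : EuclideanSpace ℝ (Fin Nb)))
    (bk : EuclideanSpace ℝ (Fin Nb)) (hbk : bk = (‖w‖ ^ 2)⁻¹ • w)
    (b : Fin (k + 1) → EuclideanSpace ℝ (Fin Nb))
    (hblast : b (Fin.last k) = bk)
    (hbcast : ∀ n : Fin k,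
      b n.castSucc = bold n - ⟪d (Fin.last k), bold n⟫ • bk) :
    (∀ n, b n ∈ Submodule.span ℝ (Set.range d)) ∧
      ∀ n m, ⟪d n, b m⟫ = if n = m then 1 else 0 := by
  set V := Submodule.span ℝ (Set.range fun i : Fin k => d i.castSucc)
  have hbkV : bk = V.dualVector (d (Fin.last k)) := by
    rw [hbk, hw, Submodule.coe_orthogonalProjectionOnto_apply, Submodule.dualVector]
  have hdV (i : Fin k) : d i.castSucc ∈ V := Submodule.subset_span ⟨i, rfl⟩
  have hVle : V ≤ Submodule.span ℝ (Set.range d) :=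
    Submodule.span_mono (Set.range_comp_subset_range _ _)
  have hlast_bk : ⟪d (Fin.last k), bk⟫ = 1 :=
    hbkV ▸ Submodule.inner_self_dualVector (linearIndependent_finSucc'.mp hind).2
  have hcast_bk (i : Fin k) : ⟪d i.castSucc, bk⟫ = 0 :=
    hbkV ▸ Submodule.inner_dualVector_of_mem (hdV i) _
  have hbk_mem : bk ∈ Submodule.span ℝ (Set.range d) :=
    hbkV ▸ Submodule.dualVector_mem hVle (Submodule.subset_span ⟨Fin.last k, rfl⟩)
  refine ⟨fun n => ?_, fun n m => ?_⟩
  · induction n using Fin.lastCases with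
    | last => exact hblast ▸ hbk_mem
    | cast i =>
      rw [hbcast i]
      exact Submodule.sub_mem _ (hVle (hboldV i)) (Submodule.smul_mem _ _ hbk_mem)
  induction m using Fin.lastCases with
  | last =>
    induction n using Fin.lastCases with
    | last => simp [hblast, hlast_bk]
    | cast i => simp [hblast, hcast_bk i, (Fin.castSucc_lt_last i).ne]
  | cast j =>
    rw [hbcast j]
    induction n using Fin.lastCases with
    | last =>
      simp [inner_sub_inner_smul_of_inner_eq_one hlast_bk, (Fin.castSucc_lt_last j).ne']
    | cast i =>
      simp [inner_sub_smul_of_inner_eq_zero (hcast_bk i), hboldbi]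
end

section
/- Let {d_1, …, d_k} be linearly independent in R^(N_b) with dual basis {b_1, …, b_k} in V = span{d_n}. Fix j, and for n ≠ j define b_n' = b_n − b_j ⟨b_n, b_j⟩/‖b_j‖². Then {b_n'}_{n≠j} is the dual basis of {d_n}_{n≠j} in the reduced span V_{/j} = span{d_n : n ≠ j}. -/
open scoped RealInnerProductSpace BigOperators

/-!
`b_n'` is `b_n` minus its projection onto `b_j`, so `⟪b_n', b_j⟫ = 0`; since pairing with `b_j`
reads off the `d_j`-coefficient of a vector of `span d`, `b_n'` lies in `span {d_i | i ≠ j}`.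
Biorthogonality is untouched because `⟪d_n, b_j⟫ = 0` for `n ≠ j`.
-/

open Submodule Set

section Biorthogonal

variable {E : Type*} [NormedAddCommGroup E] [InnerProductSpace ℝ E]

theorem inner_sub_inner_div_norm_sq_smul_self (v w : E) :
    ⟪v - (⟪v, w⟫ / ‖w‖ ^ 2) • w, w⟫ = 0 := by
  rcases eq_or_ne w 0 with rfl | hw
  · simp
  · rw [inner_sub_left, real_inner_smul_left, real_inner_self_eq_norm_sq,
      div_mul_cancel₀ _ (by positivity), sub_self]

variable {ι : Type*} [Fintype ι] [DecidableEq ι] {d b : ι → E}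

theorem eq_sum_inner_smul_of_mem_span (hbi : ∀ n m, ⟪d n, b m⟫ = if n = m then 1 else 0)
    {v : E} (hv : v ∈ span ℝ (range d)) : v = ∑ i, ⟪v, b i⟫ • d i := by
  obtain ⟨c, rfl⟩ := (mem_span_range_iff_exists_fun ℝ).mp hv
  refine Finset.sum_congr rfl fun i _ => ?_
  simp only [sum_inner, real_inner_smul_left, hbi, mul_ite, mul_one, mul_zero,
    Finset.sum_ite_eq', Finset.mem_univ, if_true]

theorem mem_span_image_ne_of_inner_eq_zero
    (hbi : ∀ n m, ⟪d n, b m⟫ = if n = m then 1 else 0) {v : E}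
    (hv : v ∈ span ℝ (range d)) {j : ι} (hvj : ⟪v, b j⟫ = 0) :
    v ∈ span ℝ (d '' {i | i ≠ j}) := by
  rw [eq_sum_inner_smul_of_mem_span hbi hv]
  refine sum_mem fun i _ => ?_
  by_cases hij : i = j
  · simp [hij, hvj]
  · exact smul_mem _ _ (subset_span ⟨i, hij, rfl⟩)

end Biorthogonal

theorem stmt_7_general (Nb k : ℕ) (d b : Fin k → EuclideanSpace ℝ (Fin Nb))
    (hbV : ∀ n, b n ∈ Submodule.span ℝ (Set.range d))
    (hbi : ∀ n m, ⟪d n, b m⟫ = if n = m then 1 else 0)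
    (j : Fin k) :
    (∀ n, n ≠ j →
      b n - (⟪b n, b j⟫ / ‖b j‖ ^ 2) • b j ∈
        Submodule.span ℝ (d '' {i | i ≠ j})) ∧
    ∀ n m, n ≠ j → m ≠ j →
      ⟪d n, b m - (⟪b m, b j⟫ / ‖b j‖ ^ 2) • b j⟫
        = if n = m then 1 else 0 := by
  refine ⟨fun n _ => ?_, fun n m hn _ => ?_⟩
  · exact mem_span_image_ne_of_inner_eq_zero hbi (sub_mem (hbV n) (smul_mem _ _ (hbV j)))
      (inner_sub_inner_div_norm_sq_smul_self _ _)
  · rw [inner_sub_right, real_inner_smul_right, hbi n j, if_neg hn, mul_zero, sub_zero, hbi]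

/-- backward biorthogonalization: removing atom `d_j`, the vectors
`b_n' = b_n − (⟨b_n,b_j⟩/‖b_j‖²) b_j`, `n ≠ j`, form the dual basis of
`{d_n}_{n≠j}` in the reduced span. -/
theorem stmt_7 (Nb k : ℕ) (d b : Fin k → EuclideanSpace ℝ (Fin Nb))
    (hind : LinearIndependent ℝ d)
    (hbV : ∀ n, b n ∈ Submodule.span ℝ (Set.range d))
    (hbi : ∀ n m, ⟪d n, b m⟫ = if n = m then 1 else 0)
    (j : Fin k) :
    (∀ n, n ≠ j →
      b n - (⟪b n, b j⟫ / ‖b j‖ ^ 2) • b j ∈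
        Submodule.span ℝ (d '' {i | i ≠ j})) ∧
    ∀ n m, n ≠ j → m ≠ j →
      ⟪d n, b m - (⟪b m, b j⟫ / ‖b j‖ ^ 2) • b j⟫
        = if n = m then 1 else 0 :=
  stmt_7_general Nb k d b hbV hbi j
end

section
/- Let {d_1, …, d_k} be linearly independent with dual basis {b_1, …, b_k} in V, let f ∈ R^(N_b), c_n = ⟨b_n, f⟩, so P_V f = Σ_n c_n d_n. Removing atom d_j, the projection onto the reduced span V_{/j} is P_{V_{/j}} f = Σ_{n≠j} c_n' d_n with updated coefficients c_n' = c_n − c_j ⟨b_j, b_n⟩/‖b_j‖². -/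
open scoped RealInnerProductSpace BigOperators

/-!
Since `b j` is orthogonal to every `d n` with `n ≠ j`, removing `d j` splits off the line `ℝ b j`
orthogonally from `V`, so `P_{V/j} f = P_V f - (⟪b j, f⟫ / ‖b j‖²) • b j`. Expanding both
`P_V f` and `b j` in the basis `d` with dual coefficients, the coefficient of `d j` cancels and the
remaining ones are the updated `c n'`.
-/

open Finset Submodule

variable {E ι : Type*} [NormedAddCommGroup E] [InnerProductSpace ℝ E] [DecidableEq ι]

def IsBiorthogonal (d b : ι → E) : Prop :=
  ∀ n m, ⟪d n, b m⟫ = if n = m then 1 else 0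

namespace IsBiorthogonal

variable {d b : ι → E}

theorem ne_zero (hdb : IsBiorthogonal d b) (j : ι) : b j ≠ 0 := by
  intro h
  simpa [h] using hdb j j

theorem mem_orthogonal_span_image_ne (hdb : IsBiorthogonal d b) (j : ι) :
    b j ∈ (span ℝ (d '' {i | i ≠ j}))ᗮ :=
  (isOrtho_span.2 (by rintro _ ⟨i, hi, rfl⟩ _ rfl; rw [hdb, if_neg hi])).symm
    (mem_span_singleton_self _)

variable [Fintype ι]

theorem sum_inner_smul_eq_of_mem_span (hdb : IsBiorthogonal d b) {v : E}
    (hv : v ∈ span ℝ (Set.range d)) : ∑ n, ⟪b n, v⟫ • d n = v := by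
  obtain ⟨a, rfl⟩ := (mem_span_range_iff_exists_fun ℝ).1 hv
  refine sum_congr rfl fun m _ => ?_
  have hbd : ∀ i, ⟪b m, d i⟫ = if i = m then 1 else 0 :=
    fun i => (real_inner_comm _ _).trans (hdb i m)
  simp only [inner_sum, real_inner_smul_right, hbd, mul_ite, mul_one, mul_zero, sum_ite_eq',
    mem_univ, if_true]

variable [(span ℝ (Set.range d)).HasOrthogonalProjection]

theorem starProjection_span_range (hdb : IsBiorthogonal d b)
    (hbV : ∀ n, b n ∈ span ℝ (Set.range d)) (f : E) :
    (span ℝ (Set.range d)).starProjection f = ∑ n, ⟪b n, f⟫ • d n := by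
  rw [← hdb.sum_inner_smul_eq_of_mem_span (starProjection_apply_mem _ f)]
  refine sum_congr rfl fun n _ => ?_
  rw [← inner_starProjection_left_eq_right, starProjection_eq_self_iff.2 (hbV n)]

theorem starProjection_span_range_sub_smul (hdb : IsBiorthogonal d b)
    (hbV : ∀ n, b n ∈ span ℝ (Set.range d)) (f : E) (j : ι) :
    (span ℝ (Set.range d)).starProjection f - (⟪b j, f⟫ / ‖b j‖ ^ 2) • b j =
      ∑ n ∈ univ.erase j, (⟪b n, f⟫ - ⟪b j, f⟫ * ⟪b j, b n⟫ / ‖b j‖ ^ 2) • d n := by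
  have hbj : ‖b j‖ ^ 2 ≠ 0 := pow_ne_zero 2 (norm_ne_zero_iff.2 (hdb.ne_zero j))
  have hbj_exp : (⟪b j, f⟫ / ‖b j‖ ^ 2) • b j =
      ∑ n, (⟪b j, f⟫ / ‖b j‖ ^ 2 * ⟪b n, b j⟫) • d n := by
    simp_rw [mul_smul, ← smul_sum, hdb.sum_inner_smul_eq_of_mem_span (hbV j)]
  rw [hdb.starProjection_span_range hbV, hbj_exp, ← sum_sub_distrib, ← sum_erase _ ?_]
  · refine sum_congr rfl fun n _ => ?_
    rw [← sub_smul, real_inner_comm (b n)]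
    congr 1
    ring
  · rw [← sub_smul, real_inner_self_eq_norm_sq, div_mul_cancel₀ _ hbj, sub_self, zero_smul]

theorem starProjection_span_image_ne (hdb : IsBiorthogonal d b)
    (hbV : ∀ n, b n ∈ span ℝ (Set.range d)) (j : ι)
    [(span ℝ (d '' {i | i ≠ j})).HasOrthogonalProjection] (f : E) :
    (span ℝ (d '' {i | i ≠ j})).starProjection f =
      ∑ n ∈ univ.erase j, (⟪b n, f⟫ - ⟪b j, f⟫ * ⟪b j, b n⟫ / ‖b j‖ ^ 2) • d n := by
  set V := span ℝ (Set.range d)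
  refine eq_starProjection_of_mem_orthogonal'
    (z := (f - V.starProjection f) + (⟪b j, f⟫ / ‖b j‖ ^ 2) • b j) ?_ ?_ ?_
  · exact sum_mem fun n hn => smul_mem _ _ (subset_span ⟨n, (mem_erase.1 hn).1, rfl⟩)
  · exact add_mem (orthogonal_le (span_mono (Set.image_subset_range _ _))
      (sub_starProjection_mem_orthogonal f)) (smul_mem _ _ (hdb.mem_orthogonal_span_image_ne j))
  · rw [← hdb.starProjection_span_range_sub_smul hbV]
    abel

end IsBiorthogonal

theorem stmt_8_general (Nb k : ℕ) (d b : Fin k → EuclideanSpace ℝ (Fin Nb))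
    (V : Submodule ℝ (EuclideanSpace ℝ (Fin Nb)))
    (hV : V = Submodule.span ℝ (Set.range d))
    (hbV : ∀ n, b n ∈ V)
    (hbi : ∀ n m, ⟪d n, b m⟫ = if n = m then 1 else 0)
    (f : EuclideanSpace ℝ (Fin Nb)) (j : Fin k) :
    (Submodule.orthogonalProjection (Submodule.span ℝ (d '' {i | i ≠ j})) f :
        EuclideanSpace ℝ (Fin Nb))
      = ∑ n ∈ Finset.univ.erase j,
          (⟪b n, f⟫ - ⟪b j, f⟫ * ⟪b j, b n⟫ / ‖b j‖ ^ 2) • d n := by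
  subst hV
  rw [← starProjection_apply]
  exact IsBiorthogonal.starProjection_span_image_ne hbi hbV j f

/-- coefficient update upon removal of atom `d_j`:
`P_{V/j} f = ∑_{n≠j} (c_n − c_j ⟨b_j,b_n⟩/‖b_j‖²) d_n` with `c_n = ⟨b_n, f⟩`. -/
theorem stmt_8 (Nb k : ℕ) (d b : Fin k → EuclideanSpace ℝ (Fin Nb))
    (hind : LinearIndependent ℝ d)
    (V : Submodule ℝ (EuclideanSpace ℝ (Fin Nb)))
    (hV : V = Submodule.span ℝ (Set.range d))
    (hbV : ∀ n, b n ∈ V)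
    (hbi : ∀ n m, ⟪d n, b m⟫ = if n = m then 1 else 0)
    (f : EuclideanSpace ℝ (Fin Nb)) (j : Fin k) :
    (Submodule.orthogonalProjection (Submodule.span ℝ (d '' {i | i ≠ j})) f :
        EuclideanSpace ℝ (Fin Nb))
      = ∑ n ∈ Finset.univ.erase j,
          (⟪b n, f⟫ - ⟪b j, f⟫ * ⟪b j, b n⟫ / ‖b j‖ ^ 2) • d n :=
  stmt_8_general Nb k d b V hV hbV hbi f j
end
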